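/- arXiv:1106.3920 — 2 statements merged into one kernel-verified Lean document; each statement's English description precedes it below -/
import Mathlib

section
/- Let J_1 ⊆ 𝒜_{m_1} and J_2 ⊆ 𝒜_{m_2} be proper ideals. Then the product ideal J_1 ⊞ J_2 ⊆ 𝒜_{m_1+m_2} is proper and its Thom–Boardman symbol is the entrywise sum of those of the factors: for every p ≥ 1, TB(J_1 ⊞ J_2)_p = TB(J_1)_p + TB(J_2)_p. -/
/-!
Write `J₁ ⊞ J₂` as `J₁.map (rename e₁) ⊔ J₂.map (rename e₂)` for the embeddings `e₁, e₂` of the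
two blocks of variables. For proper ideals the differentials at `0` of the product split into
the two blocks, so ranks, hence coranks, add. For the Jacobian step, let `rᵢ` be the rank of `Jᵢ`
and `k = r₁ + r₂ + 1`, so that `Δ^{i₁+i₂} = Δ_k`. By the Leibniz rule, modulo the ideal itself
the `k`-minors of `J₁ ⊞ J₂` are generated by minors whose rows are generators `rename e₁ φ` or
`rename e₂ ψ`; more than `r₁` rows are of the first kind or more than `r₂` of the second, and
Laplace expansion along the other rows reduces the minor to `(r₁+1)`-minors of `J₁` or
`(r₂+1)`-minors of `J₂`. Conversely, an `(r₁+1)`-minor of `J₁` times an invertible `r₂`-minor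
of `J₂` (which exists since `J₂` has rank `r₂`) is a block-diagonal `k`-minor of the product.
Hence `Δ^{i₁+i₂}(J₁ ⊞ J₂) = Δ^{i₁}J₁ ⊞ Δ^{i₂}J₂`, all these ideals stay proper, and induction
on `p` concludes.
-/

open MvPowerSeries

/-- `𝒜 m` : formal power series in `m` variables over `ℂ`, the algebraic model for the
local ring of germs of differentiable functions at the origin of `ℂ^m`. -/
abbrev Amod (m : ℕ) : Type := MvPowerSeries (Fin m) ℂ

/-- Formal partial derivative `∂/∂x_j` of a multivariate power series. -/
noncomputable def pd {m : ℕ} (j : Fin m) (φ : Amod m) : Amod m :=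
  fun e => ((e j + 1 : ℕ) : ℂ) * MvPowerSeries.coeff (e + Finsupp.single j 1) φ

/-- The differential at the origin: the vector of degree-one coefficients. -/
noncomputable def diffAtZero {m : ℕ} (φ : Amod m) : Fin m → ℂ :=
  fun j => MvPowerSeries.coeff (Finsupp.single j 1) φ

/-- The rank of an ideal `B ⊆ 𝒜 m`: the dimension of the `ℂ`-linear span of the
differentials at `0` of the elements of `B`. -/
noncomputable def rankIdeal {m : ℕ} (B : Ideal (Amod m)) : ℕ :=
  Module.finrank ℂ (Submodule.span ℂ (diffAtZero '' (B : Set (Amod m))))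

/-- The corank of an ideal `B ⊆ 𝒜 m`. -/
noncomputable def corankIdeal {m : ℕ} (B : Ideal (Amod m)) : ℕ := m - rankIdeal B

/-- The Jacobian extension `Δ_k B` (lower index): the ideal generated by `B` together with
all `k × k` minors of Jacobian matrices of `k`-tuples of elements of `B`; for `k > m` it
is `B` itself. -/
noncomputable def jacExt {m : ℕ} (k : ℕ) (B : Ideal (Amod m)) : Ideal (Amod m) :=
  if m < k then B
  else B ⊔ Ideal.span { f | ∃ φ : Fin k → Amod m, (∀ i, φ i ∈ B) ∧
    ∃ j : Fin k → Fin m, StrictMono j ∧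
      f = Matrix.det (Matrix.of fun i l => pd (j l) (φ i)) }

/-- Jacobian extension with upper index: `Δ^i B = Δ_{m-i+1} B`. -/
noncomputable def jacExtUpper {m : ℕ} (i : ℕ) (B : Ideal (Amod m)) : Ideal (Amod m) :=
  jacExt (m - i + 1) B

/-- The iterated critical extensions `TBiter J p = Δ^{i_p} ⋯ Δ^{i_1} J`. -/
noncomputable def TBiter {m : ℕ} (J : Ideal (Amod m)) : ℕ → Ideal (Amod m)
  | 0 => J
  | p + 1 => jacExtUpper (corankIdeal (TBiter J p)) (TBiter J p)

/-- The Thom–Boardman symbol, `0`-indexed: `TB J p` is the `(p+1)`-st entry `i_{p+1}`,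
i.e. `TB J 0 = corank J` and `TB J p = corank (Δ^{i_p} ⋯ Δ^{i_1} J)`. -/
noncomputable def TB {m : ℕ} (J : Ideal (Amod m)) (p : ℕ) : ℕ :=
  corankIdeal (TBiter J p)

/-- Coefficient `a_i` of the generic monic polynomial of degree `n`
(the first block of `n` variables of `𝒜 (n+r)`), with `a_n = 1` and `a_i = 0` for `i > n`. -/
noncomputable def aCoef (n r i : ℕ) : Amod (n + r) :=
  if h : i < n then MvPowerSeries.X (Fin.castAdd r ⟨i, h⟩)
  else if i = n then 1 else 0

/-- Coefficient `b_j` of the generic monic polynomial of degree `r`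
(the last block of `r` variables of `𝒜 (n+r)`), with `b_r = 1` and `b_j = 0` for `j > r`. -/
noncomputable def bCoef (n r j : ℕ) : Amod (n + r) :=
  if h : j < r then MvPowerSeries.X (Fin.natAdd n ⟨j, h⟩)
  else if j = r then 1 else 0

/-- Coefficient `c_k` of the product `(x^n + Σ_{i<n} a_i x^i) (x^r + Σ_{j<r} b_j x^j)`. -/
noncomputable def cCoef (n r k : ℕ) : Amod (n + r) :=
  ∑ p ∈ Finset.HasAntidiagonal.antidiagonal k, aCoef n r p.1 * bCoef n r p.2

/-- The ideal `I(μ_{n,r}) ⊆ 𝒜 (n+r)` of the polynomial multiplication map `μ_{n,r}`,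
generated by `c_0, …, c_{n+r-1}`. -/
noncomputable def muIdeal (n r : ℕ) : Ideal (Amod (n + r)) :=
  Ideal.span (Set.range fun k : Fin (n + r) => cCoef n r (k : ℕ))

/-- The sequence `I(n,r)` given by the Euclidean algorithm on `n` and `r` (0-indexed):
`r` repeated `n / r` times, then `r₁ = n % r` repeated `r / r₁` times, …, followed by zeros. -/
def euclidSeq (n r p : ℕ) : ℕ :=
  if h : r = 0 then 0
  else if p < n / r then r
  else euclidSeq r (n % r) (p - n / r)
termination_by r
decreasing_by exact Nat.mod_lt _ (Nat.pos_of_ne_zero h)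

/-- The `ℂ`-algebra embedding `𝒜 m₁ → 𝒜 (m₁+m₂)` using the first `m₁` variables. -/
noncomputable def embL {m₁ m₂ : ℕ} (φ : Amod m₁) : Amod (m₁ + m₂) :=
  fun e =>
    if ∀ j : Fin m₂, e (Fin.natAdd m₁ j) = 0 then
      MvPowerSeries.coeff (Finsupp.equivFunOnFinite.symm fun i => e (Fin.castAdd m₂ i)) φ
    else 0

/-- The `ℂ`-algebra embedding `𝒜 m₂ → 𝒜 (m₁+m₂)` using the last `m₂` variables. -/
noncomputable def embR {m₁ m₂ : ℕ} (φ : Amod m₂) : Amod (m₁ + m₂) :=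
  fun e =>
    if ∀ i : Fin m₁, e (Fin.castAdd m₂ i) = 0 then
      MvPowerSeries.coeff (Finsupp.equivFunOnFinite.symm fun j => e (Fin.natAdd m₁ j)) φ
    else 0

/-- The product ideal `J₁ ⊞ J₂ ⊆ 𝒜 (m₁+m₂)`, generated by the images of `J₁` and `J₂`
under the two embeddings; it models the ideal of the Cartesian product of two map-germs. -/
noncomputable def prodIdeal {m₁ m₂ : ℕ} (J₁ : Ideal (Amod m₁)) (J₂ : Ideal (Amod m₂)) :
    Ideal (Amod (m₁ + m₂)) :=
  Ideal.span (embL '' (J₁ : Set (Amod m₁)) ∪ embR '' (J₂ : Set (Amod m₂)))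

open Function Finset

theorem MultilinearMap.map_eq_zero_of_forall_mem_span {R M N ι : Type*} [CommSemiring R]
    [AddCommMonoid M] [AddCommMonoid N] [Module R M] [Module R N] [Fintype ι]
    (f : MultilinearMap R (fun _ : ι => M) N) {T : Set M}
    (hT : ∀ v : ι → M, (∀ i, v i ∈ T) → f v = 0) {v : ι → M}
    (hv : ∀ i, v i ∈ Submodule.span R T) : f v = 0 := by
  classical
  choose l hl using fun i => Finsupp.mem_span_iff_linearCombination R T (v i) |>.mp (hv i)
  have hsum : v = fun i => ∑ t ∈ (l i).support, l i t • (t : M) := by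
    funext i
    rw [← hl i, Finsupp.linearCombination_apply, Finsupp.sum]
  rw [hsum, f.map_sum_finset (fun i (t : T) => l i t • (t : M)) fun i => (l i).support]
  refine Finset.sum_eq_zero fun t _ => ?_
  rw [f.map_smul_univ, hT _ fun i => (t i).2, smul_zero]

theorem Fin.card_filter_univ_succAbove {n : ℕ} (p : Fin (n + 1) → Prop) [DecidablePred p]
    (i : Fin (n + 1)) : #{j | p j} = (if p i then 1 else 0) + #{j | p (i.succAbove j)} := by
  simp only [Finset.card_filter]
  exact Fin.sum_univ_succAbove _ i

section LinearAlgebra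

variable {K V n : Type*} [Field K] [AddCommGroup V] [Module K V] [FiniteDimensional K V]
  [Fintype n]

theorem exists_linearIndependent_fin_finrank_span (T : Set V) :
    ∃ w : Fin (Module.finrank K (Submodule.span K T)) → V,
      (∀ i, w i ∈ T) ∧ LinearIndependent K w := by
  obtain ⟨b, hbT, hspan, hli⟩ := exists_linearIndependent K T
  have : Fintype b := (LinearIndependent.setFinite hli).fintype
  have hcard : Fintype.card b = Module.finrank K (Submodule.span K T) := by
    rw [← hspan, ← finrank_span_eq_card hli, Subtype.range_coe]
  let e := Fintype.equivFinOfCardEq hcard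
  exact ⟨fun i => e.symm i, fun i => hbT (e.symm i).2, hli.comp _ e.symm.injective⟩

theorem Matrix.exists_injective_det_submatrix_ne_zero {r : ℕ} {W : Matrix (Fin r) n K}
    (hW : LinearIndependent K W.row) :
    ∃ d : Fin r → n, Injective d ∧ (W.submatrix id d).det ≠ 0 := by
  obtain ⟨κ, a, ha, hspan, hli⟩ := exists_linearIndependent' K W.col
  have : Fintype κ := Fintype.ofInjective a ha
  have hcard : Fintype.card κ = r := by
    rw [← finrank_span_eq_card hli, hspan, ← W.rank_eq_finrank_span_cols, hW.rank_matrix,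
      Fintype.card_fin]
  let e := Fintype.equivFinOfCardEq hcard
  refine ⟨a ∘ e.symm, ha.comp e.symm.injective, ?_⟩
  rw [← isUnit_iff_ne_zero, ← Matrix.isUnit_iff_isUnit_det,
    ← Matrix.linearIndependent_cols_iff_isUnit]
  exact hli.comp _ e.symm.injective

theorem Matrix.det_eq_zero_of_row_mem {k : ℕ} {U : Submodule K (n → K)}
    (hU : Module.finrank K U < k) {W : Matrix (Fin k) n K} (hW : ∀ i, W i ∈ U) (d : Fin k → n) :
    (W.submatrix id d).det = 0 := by
  by_contra h
  have hli : LinearIndependent K W :=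
    (Matrix.linearIndependent_rows_of_det_ne_zero h).of_comp (LinearMap.funLeft K K d)
  have := Submodule.finrank_mono (Submodule.span_le.mpr (Set.range_subset_iff.mpr hW))
  rw [finrank_span_eq_card hli, Fintype.card_fin] at this
  omega

end LinearAlgebra

theorem Submodule.finrank_map_extendByZero_sup {K ι₁ ι₂ ι : Type*} [Field K] [Finite ι₁]
    [Finite ι₂] {e₁ : ι₁ → ι} {e₂ : ι₂ → ι} (he₁ : Injective e₁) (he₂ : Injective e₂)
    (he : ∀ i j, e₁ i ≠ e₂ j) (V₁ : Submodule K (ι₁ → K)) (V₂ : Submodule K (ι₂ → K)) :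
    Module.finrank K ↥(V₁.map (ExtendByZero.linearMap K e₁) ⊔
        V₂.map (ExtendByZero.linearMap K e₂)) = Module.finrank K V₁ + Module.finrank K V₂ := by
  have hdisj : V₁.map (ExtendByZero.linearMap K e₁) ⊓ V₂.map (ExtendByZero.linearMap K e₂) = ⊥ := by
    rw [eq_bot_iff]
    rintro _ ⟨⟨v, -, rfl⟩, ⟨w, -, hw⟩⟩
    refine (Submodule.mem_bot K).mpr (funext fun y => ?_)
    by_cases hy : ∃ i, e₁ i = y
    · obtain ⟨i, rfl⟩ := hy
      rw [← hw, ExtendByZero.linearMap_apply, extend_apply' _ _ _ fun ⟨j, hj⟩ => he i j hj.symm]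
    · rw [ExtendByZero.linearMap_apply, extend_apply' _ _ _ hy]
  have := Submodule.finrank_sup_add_finrank_inf_eq (V₁.map (ExtendByZero.linearMap K e₁))
    (V₂.map (ExtendByZero.linearMap K e₂))
  rw [hdisj, finrank_bot, add_zero] at this
  rw [this, ← (Submodule.equivMapOfInjective _ (extend_injective he₁ (0 : ι → K)) V₁).finrank_eq,
    ← (Submodule.equivMapOfInjective _ (extend_injective he₂ (0 : ι → K)) V₂).finrank_eq]

namespace MvPowerSeries

section Jacobian

variable {σ R : Type*} [CommRing R]

noncomputable def jacobian {k : ℕ} (φ : Fin k → MvPowerSeries σ R) (c : Fin k → σ) :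
    Matrix (Fin k) (Fin k) (MvPowerSeries σ R) :=
  Matrix.of fun i l => pderiv R (c l) (φ i)

/-- Columns are only required to be distinct, not increasing as in `jacExt`: reordering them
changes a minor by a sign, so both kinds of minors generate the same ideal
(`jacExt_eq_jacobianExt`). -/
def jacobianMinors (k : ℕ) (S : Set (MvPowerSeries σ R)) : Set (MvPowerSeries σ R) :=
  {f | ∃ φ : Fin k → MvPowerSeries σ R, (∀ i, φ i ∈ S) ∧
    ∃ c : Fin k → σ, Injective c ∧ f = (jacobian φ c).det}

noncomputable def jacobianExt (k : ℕ) (B : Ideal (MvPowerSeries σ R)) :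
    Ideal (MvPowerSeries σ R) :=
  B ⊔ Ideal.span (jacobianMinors k B)

theorem det_jacobian_comp_perm {k : ℕ} (φ : Fin k → MvPowerSeries σ R) (c : Fin k → σ)
    (τ : Equiv.Perm (Fin k)) :
    (jacobian φ (c ∘ τ)).det = Equiv.Perm.sign τ * (jacobian φ c).det :=
  Matrix.det_permute' τ (jacobian φ c)

theorem jacobianMinors_mono (k : ℕ) {S T : Set (MvPowerSeries σ R)} (h : S ⊆ T) :
    jacobianMinors k S ⊆ jacobianMinors k T := by
  rintro _ ⟨φ, hφ, c, hc, rfl⟩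
  exact ⟨φ, fun i => h (hφ i), c, hc, rfl⟩

theorem jacobianMinors_span_subset (k : ℕ) (S : Set (MvPowerSeries σ R)) :
    jacobianMinors k (Ideal.span S : Set (MvPowerSeries σ R)) ⊆
      (Ideal.span S ⊔ Ideal.span (jacobianMinors k S) : Ideal (MvPowerSeries σ R)) := by
  rintro _ ⟨θ, hθ, c, hc, rfl⟩
  set I := Ideal.span S ⊔ Ideal.span (jacobianMinors k S)
  let π := Ideal.Quotient.mk I
  -- Modulo `I`, the Leibniz rule makes the row of `a * g` equal to `a` times the row of `g` for
  -- `g ∈ span S`; by multilinearity the determinant reduces to minors with rows in `S`.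
  let row : MvPowerSeries σ R → Fin k → MvPowerSeries σ R ⧸ I := fun g l => π (pderiv R (c l) g)
  have hrow : ∀ g ∈ Ideal.span S, row g ∈ Submodule.span (MvPowerSeries σ R ⧸ I) (row '' S) := by
    intro g hg
    induction hg using Submodule.span_induction with
    | mem g hg => exact Submodule.subset_span ⟨g, hg, rfl⟩
    | zero =>
      convert Submodule.zero_mem _
      funext l
      simp [row]
    | add x y _ _ hx hy => simpa [row, Pi.add_def] using Submodule.add_mem _ hx hy
    | smul a x hx hx' =>
      have hπx : π x = 0 := Ideal.Quotient.eq_zero_iff_mem.mpr (Ideal.mem_sup_left hx)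
      have : row (a • x) = π a • row x := by
        funext l
        simp [row, Derivation.leibniz, hπx]
      rw [this]
      exact Submodule.smul_mem _ _ hx'
  rw [SetLike.mem_coe, ← Ideal.Quotient.eq_zero_iff_mem, RingHom.map_det]
  refine Matrix.detRowAlternating.toMultilinearMap.map_eq_zero_of_forall_mem_span ?_
    (v := fun i => row (θ i)) fun i => hrow _ (hθ i)
  intro v hv
  choose g hg hgv using hv
  have hmem : (jacobian g c).det ∈ I :=
    Ideal.mem_sup_right (Ideal.subset_span ⟨g, hg, c, hc, rfl⟩)
  rw [← Ideal.Quotient.eq_zero_iff_mem, RingHom.map_det] at hmem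
  rw [← hmem]
  change Matrix.det v = _
  congr 1
  ext i l
  simp [← hgv, row, π, jacobian]

open scoped Classical in
theorem det_jacobian_mem_of_lt_card {F : Set (MvPowerSeries σ R)} {K : Set σ}
    (hF : ∀ f ∈ F, ∀ l ∉ K, pderiv R l f = 0) {I : Ideal (MvPowerSeries σ R)} {r : ℕ}
    (hI : ∀ φ : Fin (r + 1) → MvPowerSeries σ R, (∀ i, φ i ∈ F) →
      ∀ c : Fin (r + 1) → σ, Injective c → (∀ l, c l ∈ K) → (jacobian φ c).det ∈ I)
    {k : ℕ} (θ : Fin k → MvPowerSeries σ R) (hr : r < #{i | θ i ∈ F})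
    (c : Fin k → σ) (hc : Injective c) : (jacobian θ c).det ∈ I := by
  -- Expand along a row outside `F`, or along any row while more than `r + 1` rows remain; in
  -- the end `r + 1` rows from `F` are left, and either all columns lie in `K` or one vanishes.
  induction k with
  | zero => simp at hr
  | succ k ih =>
    have expand (i : Fin (k + 1)) (hi : r < #{j | θ (i.succAbove j) ∈ F}) :
        (jacobian θ c).det ∈ I := by
      rw [Matrix.det_succ_row _ i]
      exact Ideal.sum_mem _ fun l _ => Ideal.mul_mem_left _ _ <|
        ih _ hi _ (hc.comp Fin.succAbove_right_injective)
    by_cases hθF : ∀ i, θ i ∈ F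
    swap
    · obtain ⟨i, hi⟩ := not_forall.mp hθF
      exact expand i (by simpa [Fin.card_filter_univ_succAbove _ i, hi] using hr)
    simp only [hθF, Finset.filter_true, Finset.card_univ, Fintype.card_fin] at hr
    obtain hrk | rfl := (Nat.lt_succ_iff.mp hr).lt_or_eq
    · exact expand 0 (by simpa [hθF] using hrk)
    by_cases hK : ∀ l, c l ∈ K
    · exact hI θ hθF c hc hK
    obtain ⟨l, hl⟩ := not_forall.mp hK
    rw [Matrix.det_eq_zero_of_column_eq_zero l fun i => hF _ (hθF i) _ hl]
    exact I.zero_mem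

theorem det_jacobian_append {a b : ℕ} (φ : Fin a → MvPowerSeries σ R)
    (ψ : Fin b → MvPowerSeries σ R) (c : Fin a → σ) (d : Fin b → σ)
    (hφ : ∀ i l, pderiv R (d l) (φ i) = 0) (hψ : ∀ i l, pderiv R (c l) (ψ i) = 0) :
    (jacobian (Fin.append φ ψ) (Fin.append c d)).det =
      (jacobian φ c).det * (jacobian ψ d).det := by
  rw [← Matrix.det_submatrix_equiv_self finSumFinEquiv, ← Matrix.det_fromBlocks_zero₂₁ _ 0]
  congr 1
  ext (i | i) (l | l) <;> simp [jacobian, hφ, hψ]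

end Jacobian

section Rename

variable {σ τ R : Type*} [CommRing R] (e : σ ↪ τ)

theorem coeff_rename_of_apply_ne_zero {n : τ →₀ ℕ} {j : τ} (hj : j ∉ Set.range e)
    (hn : n j ≠ 0) (φ : MvPowerSeries σ R) : coeff n (rename e φ) = 0 := by
  refine coeff_rename_eq_zero _ _ ?_
  rintro ⟨a, rfl⟩
  exact hn (Finsupp.mapDomain_of_notMem_range _ _ hj)

theorem pderiv_rename_of_notMem_range {j : τ} (hj : j ∉ Set.range e) (φ : MvPowerSeries σ R) :
    pderiv R j (rename e φ) = 0 := by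
  ext n
  rw [coeff_pderiv, coeff_rename_of_apply_ne_zero e hj (by simp), zero_mul, map_zero]

theorem pderiv_rename (i : σ) (φ : MvPowerSeries σ R) :
    pderiv R (e i) (rename e φ) = rename e (pderiv R i φ) := by
  ext n
  by_cases hn : ↑n.support ⊆ Set.range e
  · obtain ⟨a, rfl⟩ := (Finsupp.mem_range_embDomain_iff e n).mpr hn
    rw [coeff_pderiv, ← Finsupp.embDomain_single, ← Finsupp.embDomain_add,
      coeff_embDomain_rename, coeff_embDomain_rename, coeff_pderiv, Finsupp.embDomain_apply_self]
  · obtain ⟨j, hjn, hj⟩ := Set.not_subset.mp hn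
    have hj' : n j ≠ 0 := Finsupp.mem_support_iff.mp hjn
    rw [coeff_pderiv, coeff_rename_of_apply_ne_zero e hj (by rw [Finsupp.add_apply]; omega),
      coeff_rename_of_apply_ne_zero e hj hj', zero_mul]

theorem det_jacobian_rename {k : ℕ} (φ : Fin k → MvPowerSeries σ R) (c : Fin k → σ) :
    (jacobian (rename e ∘ φ) (e ∘ c)).det = rename e (jacobian φ c).det := by
  rw [AlgHom.map_det]
  congr 1
  ext i l
  simp [jacobian, pderiv_rename]

end Rename

section Product

variable {σ₁ σ₂ τ R : Type*} [CommRing R] (e₁ : σ₁ ↪ τ) (e₂ : σ₂ ↪ τ)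

open scoped Classical in
theorem det_jacobian_mem_span_rename_of_lt_card (B : Set (MvPowerSeries σ₁ R)) {r k : ℕ}
    (θ : Fin k → MvPowerSeries τ R) (hr : r < #{i | θ i ∈ rename e₁ '' B})
    (c : Fin k → τ) (hc : Injective c) :
    (jacobian θ c).det ∈ Ideal.span (rename e₁ '' jacobianMinors (r + 1) B) := by
  refine det_jacobian_mem_of_lt_card (K := Set.range e₁) ?_ ?_ θ hr c hc
  · rintro _ ⟨φ, -, rfl⟩ l hl
    exact pderiv_rename_of_notMem_range e₁ hl φ
  · intro φ hφ c hc hcK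
    choose φ' hφ' hφφ' using hφ
    choose c' hcc' using hcK
    obtain rfl : φ = rename e₁ ∘ φ' := funext fun i => (hφφ' i).symm
    obtain rfl : c = e₁ ∘ c' := funext fun l => (hcc' l).symm
    rw [det_jacobian_rename]
    exact Ideal.subset_span ⟨_, ⟨φ', hφ', c', hc.of_comp, rfl⟩, rfl⟩

variable {e₁ e₂}

theorem rename_det_mul_rename_det_mem_jacobianMinors (he : ∀ i j, e₁ i ≠ e₂ j) {a b : ℕ}
    {B₁ : Set (MvPowerSeries σ₁ R)} {B₂ : Set (MvPowerSeries σ₂ R)}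
    {φ : Fin a → MvPowerSeries σ₁ R} (hφ : ∀ i, φ i ∈ B₁)
    {ψ : Fin b → MvPowerSeries σ₂ R} (hψ : ∀ i, ψ i ∈ B₂)
    {c : Fin a → σ₁} (hc : Injective c) {d : Fin b → σ₂} (hd : Injective d) :
    rename e₁ (jacobian φ c).det * rename e₂ (jacobian ψ d).det ∈
      jacobianMinors (a + b) (rename e₁ '' B₁ ∪ rename e₂ '' B₂) := by
  rw [← det_jacobian_rename, ← det_jacobian_rename, ← det_jacobian_append]
  · refine ⟨_, fun i => ?_, _, ?_, rfl⟩
    · induction i using Fin.addCases with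
      | left i => exact Or.inl (by rw [Fin.append_left]; exact ⟨φ i, hφ i, rfl⟩)
      | right i => exact Or.inr (by rw [Fin.append_right]; exact ⟨ψ i, hψ i, rfl⟩)
    · exact Fin.append_injective_iff.mpr
        ⟨e₁.injective.comp hc, e₂.injective.comp hd, fun i j => he _ _⟩
  · exact fun i l => pderiv_rename_of_notMem_range e₁ (fun ⟨x, hx⟩ => he x _ hx) _
  · exact fun i l => pderiv_rename_of_notMem_range e₂ (fun ⟨x, hx⟩ => he _ x hx.symm) _

theorem span_rename_jacobianMinors_le_jacobianExt (he : ∀ i j, e₁ i ≠ e₂ j)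
    {B₁ : Ideal (MvPowerSeries σ₁ R)} {B₂ : Ideal (MvPowerSeries σ₂ R)} {r₁ r₂ : ℕ}
    (h₂ : ∃ ψ : Fin r₂ → MvPowerSeries σ₂ R, (∀ i, ψ i ∈ B₂) ∧
      ∃ d, Injective d ∧ IsUnit (jacobian ψ d).det) :
    Ideal.span (rename e₁ '' jacobianMinors (r₁ + 1) B₁) ≤
      jacobianExt (r₁ + r₂ + 1) (B₁.map (rename e₁) ⊔ B₂.map (rename e₂)) := by
  obtain ⟨ψ, hψ, d, hd, hu⟩ := h₂
  have hS : rename e₁ '' (B₁ : Set (MvPowerSeries σ₁ R)) ∪ rename e₂ '' (B₂ : Set _) ⊆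
      (B₁.map (rename e₁) ⊔ B₂.map (rename e₂) : Ideal (MvPowerSeries τ R)) :=
    Set.union_subset (fun _ h => Ideal.mem_sup_left (Ideal.subset_span h))
      (fun _ h => Ideal.mem_sup_right (Ideal.subset_span h))
  rw [Ideal.span_le]
  rintro _ ⟨_, ⟨φ, hφ, c, hc, rfl⟩, rfl⟩
  have := jacobianMinors_mono _ hS (rename_det_mul_rename_det_mem_jacobianMinors he hφ hψ hc hd)
  rw [Nat.add_right_comm] at this
  exact (Ideal.mul_unit_mem_iff_mem _ (hu.map (rename e₂))).mp
    (Ideal.mem_sup_right (Ideal.subset_span this))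

theorem jacobianExt_map_rename_sup_le {B₁ : Ideal (MvPowerSeries σ₁ R)}
    {B₂ : Ideal (MvPowerSeries σ₂ R)} {r₁ r₂ : ℕ} :
    jacobianExt (r₁ + r₂ + 1) (B₁.map (rename e₁) ⊔ B₂.map (rename e₂)) ≤
      (jacobianExt (r₁ + 1) B₁).map (rename e₁) ⊔ (jacobianExt (r₂ + 1) B₂).map (rename e₂) := by
  classical
  set S := rename e₁ '' (B₁ : Set (MvPowerSeries σ₁ R)) ∪ rename e₂ '' (B₂ : Set _)
  have hP : B₁.map (rename e₁) ⊔ B₂.map (rename e₂) = Ideal.span S := (Ideal.span_union _ _).symm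
  simp only [jacobianExt, Ideal.map_sup, Ideal.map_span]
  refine sup_le (sup_le_sup le_sup_left le_sup_left) ?_
  rw [Ideal.span_le, hP]
  intro f hf
  refine SetLike.le_def.mp (sup_le ?_ ?_) (jacobianMinors_span_subset _ S hf)
  · rw [← hP]
    exact sup_le_sup le_sup_left le_sup_left
  rw [Ideal.span_le]
  rintro _ ⟨θ, hθ, c, hc, rfl⟩
  have hcount : r₁ + r₂ + 1 ≤
      #{i | θ i ∈ rename e₁ '' B₁} + #{i | θ i ∈ rename e₂ '' B₂} :=
    calc r₁ + r₂ + 1 = #{i | θ i ∈ S} := by simp [hθ]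
      _ ≤ _ := by
        simp only [S, Set.mem_union, Finset.filter_or]
        exact Finset.card_union_le _ _
  obtain h | h : r₁ < #{i | θ i ∈ rename e₁ '' B₁} ∨ r₂ < #{i | θ i ∈ rename e₂ '' B₂} := by
    omega
  · exact SetLike.le_def.mp (le_sup_right.trans le_sup_left)
      (det_jacobian_mem_span_rename_of_lt_card e₁ _ θ h c hc)
  · exact SetLike.le_def.mp (le_sup_right.trans le_sup_right)
      (det_jacobian_mem_span_rename_of_lt_card e₂ _ θ h c hc)

theorem jacobianExt_map_rename_sup (he : ∀ i j, e₁ i ≠ e₂ j)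
    {B₁ : Ideal (MvPowerSeries σ₁ R)} {B₂ : Ideal (MvPowerSeries σ₂ R)} {r₁ r₂ : ℕ}
    (h₁ : ∃ φ : Fin r₁ → MvPowerSeries σ₁ R, (∀ i, φ i ∈ B₁) ∧
      ∃ c, Injective c ∧ IsUnit (jacobian φ c).det)
    (h₂ : ∃ ψ : Fin r₂ → MvPowerSeries σ₂ R, (∀ i, ψ i ∈ B₂) ∧
      ∃ d, Injective d ∧ IsUnit (jacobian ψ d).det) :
    jacobianExt (r₁ + r₂ + 1) (B₁.map (rename e₁) ⊔ B₂.map (rename e₂)) =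
      (jacobianExt (r₁ + 1) B₁).map (rename e₁) ⊔ (jacobianExt (r₂ + 1) B₂).map (rename e₂) := by
  refine le_antisymm jacobianExt_map_rename_sup_le ?_
  have h₂₁ := span_rename_jacobianMinors_le_jacobianExt (fun i j => (he j i).symm) h₁
    (B₁ := B₂) (r₁ := r₂)
  rw [sup_comm, add_comm r₂ r₁] at h₂₁
  simp only [jacobianExt, Ideal.map_sup, Ideal.map_span]
  exact sup_le
    (sup_le (le_sup_left.trans le_sup_left) (span_rename_jacobianMinors_le_jacobianExt he h₂))
    (sup_le (le_sup_right.trans le_sup_left) h₂₁)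

end Product

section Field

variable {σ τ K : Type*} [Field K]

theorem le_ker_constantCoeff {B : Ideal (MvPowerSeries σ K)} (hB : B ≠ ⊤) :
    B ≤ RingHom.ker constantCoeff := fun φ hφ => by
  by_contra h
  exact hB (B.eq_top_of_isUnit_mem hφ (isUnit_iff_constantCoeff.mpr (isUnit_iff_ne_zero.mpr h)))

theorem map_rename_le_ker_constantCoeff {B : Ideal (MvPowerSeries σ K)} (hB : B ≠ ⊤)
    (e : σ ↪ τ) : B.map (rename e) ≤ RingHom.ker constantCoeff := by
  rw [Ideal.map_le_iff_le_comap]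
  intro φ hφ
  simpa [RingHom.mem_ker] using le_ker_constantCoeff hB hφ

end Field

end MvPowerSeries

section Germs

variable {m n m₁ m₂ : ℕ}

theorem pd_eq_pderiv (j : Fin m) : (pd j : Amod m → Amod m) = pderiv ℂ j := by
  funext φ
  ext e
  rw [coeff_pderiv, mul_comm]
  show ((e j + 1 : ℕ) : ℂ) * _ = _
  push_cast
  rfl

theorem diffAtZero_apply (φ : Amod m) (j : Fin m) :
    diffAtZero φ j = constantCoeff (pderiv ℂ j φ) := by
  rw [← coeff_zero_eq_constantCoeff_apply, coeff_pderiv]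
  simp [diffAtZero]

theorem castAddEmb_ne_natAddEmb (i : Fin m₁) (j : Fin m₂) :
    Fin.castAddEmb m₂ i ≠ Fin.natAddEmb m₁ j := by
  rw [Fin.castAddEmb_apply, Fin.natAddEmb_apply, Ne, Fin.ext_iff, Fin.val_castAdd, Fin.val_natAdd]
  omega

theorem embL_eq_rename : (embL : Amod m₁ → Amod (m₁ + m₂)) = rename (Fin.castAddEmb m₂) := by
  funext φ
  ext n
  change ite _ _ _ = _
  split_ifs with h
  · obtain ⟨a, rfl⟩ : n ∈ Set.range (Finsupp.embDomain (Fin.castAddEmb m₂)) := by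
      refine (Finsupp.mem_range_embDomain_iff _ n).mpr fun x hx => ?_
      induction x using Fin.addCases with
      | left i => exact ⟨i, rfl⟩
      | right j => exact absurd (h j) (Finsupp.mem_support_iff.mp hx)
    rw [coeff_embDomain_rename]
    congr
    ext i
    rw [Finsupp.coe_equivFunOnFinite_symm, ← Fin.castAddEmb_apply, Finsupp.embDomain_apply_self]
  · obtain ⟨j, hj⟩ := not_forall.mp h
    exact (coeff_rename_of_apply_ne_zero _
      (fun ⟨i, hi⟩ => castAddEmb_ne_natAddEmb i j hi) hj φ).symm

theorem embR_eq_rename : (embR : Amod m₂ → Amod (m₁ + m₂)) = rename (Fin.natAddEmb m₁) := by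
  funext ψ
  ext n
  change ite _ _ _ = _
  split_ifs with h
  · obtain ⟨b, rfl⟩ : n ∈ Set.range (Finsupp.embDomain (Fin.natAddEmb m₁)) := by
      refine (Finsupp.mem_range_embDomain_iff _ n).mpr fun x hx => ?_
      induction x using Fin.addCases with
      | left i => exact absurd (h i) (Finsupp.mem_support_iff.mp hx)
      | right j => exact ⟨j, rfl⟩
    rw [coeff_embDomain_rename]
    congr
    ext j
    rw [Finsupp.coe_equivFunOnFinite_symm, ← Fin.natAddEmb_apply, Finsupp.embDomain_apply_self]
  · obtain ⟨i, hi⟩ := not_forall.mp h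
    exact (coeff_rename_of_apply_ne_zero _
      (fun ⟨j, hj⟩ => castAddEmb_ne_natAddEmb i j hj.symm) hi ψ).symm

theorem prodIdeal_eq_map_sup (J₁ : Ideal (Amod m₁)) (J₂ : Ideal (Amod m₂)) :
    prodIdeal J₁ J₂ = J₁.map (rename (Fin.castAddEmb m₂)) ⊔ J₂.map (rename (Fin.natAddEmb m₁)) := by
  rw [prodIdeal, embL_eq_rename, embR_eq_rename, Ideal.span_union]
  rfl

theorem jacExt_eq_jacobianExt (k : ℕ) (B : Ideal (Amod m)) : jacExt k B = jacobianExt k B := by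
  rw [jacExt, jacobianExt]
  split_ifs with hk
  · convert (sup_bot_eq B).symm
    refine Ideal.span_eq_bot.mpr fun _ ⟨_, _, c, hc, _⟩ => ?_
    have := Fintype.card_le_of_injective c hc
    simp only [Fintype.card_fin] at this
    omega
  · simp_rw [pd_eq_pderiv]
    congr 1
    apply le_antisymm
    · exact Ideal.span_mono fun _ ⟨φ, hφ, c, hc, hf⟩ => ⟨φ, hφ, c, hc.injective, hf⟩
    · rw [Ideal.span_le]
      rintro _ ⟨φ, hφ, c, hc, rfl⟩
      set τ := Tuple.sort c
      have hsign : IsUnit (Equiv.Perm.sign τ : MvPowerSeries (Fin m) ℂ) :=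
        (Equiv.Perm.sign τ).isUnit.map (Int.castRingHom _)
      refine (Ideal.unit_mul_mem_iff_mem _ hsign).mp ?_
      rw [← det_jacobian_comp_perm]
      exact Ideal.subset_span ⟨φ, hφ, c ∘ τ,
        (Tuple.monotone_sort c).strictMono_of_injective (hc.comp τ.injective), rfl⟩

theorem diffAtZero_add (φ ψ : Amod m) : diffAtZero (φ + ψ) = diffAtZero φ + diffAtZero ψ := by
  funext j
  simp [diffAtZero]

theorem diffAtZero_mul (a φ : Amod m) :
    diffAtZero (a * φ) = constantCoeff a • diffAtZero φ + constantCoeff φ • diffAtZero a := by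
  funext j
  simp [diffAtZero_apply, Derivation.leibniz]

theorem span_diffAtZero_span {S : Set (Amod m)}
    (hS : S ⊆ (RingHom.ker constantCoeff : Ideal (Amod m))) :
    Submodule.span ℂ (diffAtZero '' (Ideal.span S : Set (Amod m))) =
      Submodule.span ℂ (diffAtZero '' S) := by
  refine le_antisymm (Submodule.span_le.mpr ?_)
    (Submodule.span_mono (Set.image_mono (Ideal.subset_span : S ⊆ Ideal.span S)))
  rintro _ ⟨x, hx, rfl⟩
  induction hx using Submodule.span_induction with
  | mem x hx => exact Submodule.subset_span ⟨x, hx, rfl⟩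
  | zero =>
    rw [show diffAtZero (0 : Amod m) = 0 from funext fun _ => map_zero _]
    exact Submodule.zero_mem _
  | add x y _ _ hx hy => rw [diffAtZero_add]; exact Submodule.add_mem _ hx hy
  | smul a x hx ih =>
    have : constantCoeff x = 0 := Ideal.span_le.mpr hS hx
    rw [smul_eq_mul, diffAtZero_mul, this, zero_smul, add_zero]
    exact Submodule.smul_mem _ _ ih

theorem diffAtZero_rename (e : Fin m ↪ Fin n) (φ : Amod m) :
    diffAtZero (rename e φ) = ExtendByZero.linearMap ℂ e (diffAtZero φ) := by
  funext x
  rw [ExtendByZero.linearMap_apply, diffAtZero_apply]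
  by_cases hx : ∃ i, e i = x
  · obtain ⟨i, rfl⟩ := hx
    rw [pderiv_rename, constantCoeff_rename, e.injective.extend_apply, diffAtZero_apply]
  · rw [pderiv_rename_of_notMem_range e hx, map_zero, extend_apply' _ _ _ hx]
    rfl

theorem rankIdeal_map_rename_sup {e₁ : Fin m₁ ↪ Fin n} {e₂ : Fin m₂ ↪ Fin n}
    (he : ∀ i j, e₁ i ≠ e₂ j) {J₁ : Ideal (Amod m₁)} {J₂ : Ideal (Amod m₂)} (h₁ : J₁ ≠ ⊤)
    (h₂ : J₂ ≠ ⊤) :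
    rankIdeal (J₁.map (rename e₁) ⊔ J₂.map (rename e₂)) = rankIdeal J₁ + rankIdeal J₂ := by
  set S := rename e₁ '' (J₁ : Set (Amod m₁)) ∪ rename e₂ '' (J₂ : Set (Amod m₂))
  have hP : J₁.map (rename e₁) ⊔ J₂.map (rename e₂) = Ideal.span S := (Ideal.span_union _ _).symm
  have hS : S ⊆ (RingHom.ker constantCoeff : Ideal (Amod n)) := by
    rw [← Ideal.span_le, ← hP]
    exact sup_le (map_rename_le_ker_constantCoeff h₁ e₁) (map_rename_le_ker_constantCoeff h₂ e₂)
  have himage {k : ℕ} (e : Fin k ↪ Fin n) (J : Set (Amod k)) :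
      diffAtZero '' (rename e '' J) = ExtendByZero.linearMap ℂ e '' (diffAtZero '' J) := by
    simp only [Set.image_image, diffAtZero_rename]
  rw [rankIdeal, hP, span_diffAtZero_span hS, Set.image_union, himage, himage,
    Submodule.span_union, Submodule.span_image, Submodule.span_image]
  exact Submodule.finrank_map_extendByZero_sup e₁.injective e₂.injective he _ _

theorem constantCoeff_mapMatrix_jacobian {k : ℕ} (φ : Fin k → Amod m) (c : Fin k → Fin m) :
    constantCoeff.mapMatrix (jacobian φ c) =
      (Matrix.of fun i => diffAtZero (φ i)).submatrix id c := by
  ext i l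
  simp [jacobian, diffAtZero_apply]

theorem exists_isUnit_det_jacobian (B : Ideal (Amod m)) :
    ∃ ψ : Fin (rankIdeal B) → Amod m, (∀ i, ψ i ∈ B) ∧
      ∃ d, Injective d ∧ IsUnit (jacobian ψ d).det := by
  unfold rankIdeal
  obtain ⟨w, hwB, hli⟩ :=
    exists_linearIndependent_fin_finrank_span (K := ℂ) (diffAtZero '' (B : Set (Amod m)))
  choose ψ hψ hψw using hwB
  obtain ⟨d, hd, hdet⟩ := Matrix.exists_injective_det_submatrix_ne_zero (W := Matrix.of w) hli
  refine ⟨ψ, hψ, d, hd, ?_⟩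
  rw [isUnit_iff_constantCoeff, RingHom.map_det, constantCoeff_mapMatrix_jacobian,
    isUnit_iff_ne_zero]
  simp_rw [hψw]
  exact hdet

theorem rankIdeal_le (B : Ideal (Amod m)) : rankIdeal B ≤ m :=
  (Submodule.finrank_le _).trans (Module.finrank_fin_fun ℂ).le

theorem jacExtUpper_corankIdeal (B : Ideal (Amod m)) :
    jacExtUpper (corankIdeal B) B = jacobianExt (rankIdeal B + 1) B := by
  rw [jacExtUpper, corankIdeal, Nat.sub_sub_self (rankIdeal_le B), jacExt_eq_jacobianExt]

theorem jacobianExt_rankIdeal_succ_ne_top {B : Ideal (Amod m)} (hB : B ≠ ⊤) :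
    jacobianExt (rankIdeal B + 1) B ≠ ⊤ := by
  refine ne_top_of_le_ne_top (RingHom.ker_ne_top constantCoeff)
    (sup_le (le_ker_constantCoeff hB) (Ideal.span_le.mpr ?_))
  rintro _ ⟨φ, hφ, c, -, rfl⟩
  rw [SetLike.mem_coe, RingHom.mem_ker, RingHom.map_det, constantCoeff_mapMatrix_jacobian]
  exact Matrix.det_eq_zero_of_row_mem (Nat.lt_succ_self (rankIdeal B))
    (fun i => Submodule.subset_span ⟨φ i, hφ i, rfl⟩) c

theorem prodIdeal_ne_top {J₁ : Ideal (Amod m₁)} {J₂ : Ideal (Amod m₂)} (h₁ : J₁ ≠ ⊤)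
    (h₂ : J₂ ≠ ⊤) : prodIdeal J₁ J₂ ≠ ⊤ := by
  rw [prodIdeal_eq_map_sup]
  exact ne_top_of_le_ne_top (RingHom.ker_ne_top constantCoeff)
    (sup_le (map_rename_le_ker_constantCoeff h₁ _) (map_rename_le_ker_constantCoeff h₂ _))

theorem corankIdeal_prodIdeal {J₁ : Ideal (Amod m₁)} {J₂ : Ideal (Amod m₂)} (h₁ : J₁ ≠ ⊤)
    (h₂ : J₂ ≠ ⊤) : corankIdeal (prodIdeal J₁ J₂) = corankIdeal J₁ + corankIdeal J₂ := by
  have := rankIdeal_map_rename_sup castAddEmb_ne_natAddEmb h₁ h₂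
  rw [← prodIdeal_eq_map_sup] at this
  have := rankIdeal_le J₁
  have := rankIdeal_le J₂
  simp only [corankIdeal]
  omega

theorem jacExtUpper_prodIdeal {J₁ : Ideal (Amod m₁)} {J₂ : Ideal (Amod m₂)} (h₁ : J₁ ≠ ⊤)
    (h₂ : J₂ ≠ ⊤) :
    jacExtUpper (corankIdeal (prodIdeal J₁ J₂)) (prodIdeal J₁ J₂) =
      prodIdeal (jacExtUpper (corankIdeal J₁) J₁) (jacExtUpper (corankIdeal J₂) J₂) := by
  rw [jacExtUpper_corankIdeal, jacExtUpper_corankIdeal, jacExtUpper_corankIdeal,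
    prodIdeal_eq_map_sup, prodIdeal_eq_map_sup,
    rankIdeal_map_rename_sup castAddEmb_ne_natAddEmb h₁ h₂,
    jacobianExt_map_rename_sup castAddEmb_ne_natAddEmb (exists_isUnit_det_jacobian J₁)
      (exists_isUnit_det_jacobian J₂)]

theorem TBiter_ne_top {J : Ideal (Amod m)} (hJ : J ≠ ⊤) (p : ℕ) : TBiter J p ≠ ⊤ := by
  induction p with
  | zero => exact hJ
  | succ p ih =>
    rw [TBiter, jacExtUpper_corankIdeal]
    exact jacobianExt_rankIdeal_succ_ne_top ih

theorem TBiter_prodIdeal {J₁ : Ideal (Amod m₁)} {J₂ : Ideal (Amod m₂)} (h₁ : J₁ ≠ ⊤)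
    (h₂ : J₂ ≠ ⊤) (p : ℕ) :
    TBiter (prodIdeal J₁ J₂) p = prodIdeal (TBiter J₁ p) (TBiter J₂ p) := by
  induction p with
  | zero => rfl
  | succ p ih =>
    rw [TBiter, ih, jacExtUpper_prodIdeal (TBiter_ne_top h₁ p) (TBiter_ne_top h₂ p)]
    rfl

end Germs

/-- **Additivity of Thom–Boardman symbols under Cartesian product.** If `J₁ ⊆ 𝒜 m₁` and
`J₂ ⊆ 𝒜 m₂` are proper ideals, then `J₁ ⊞ J₂ ⊆ 𝒜 (m₁+m₂)` is proper and
`TB(J₁ ⊞ J₂)ₚ = TB(J₁)ₚ + TB(J₂)ₚ` for every `p`. -/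
theorem tb_prodIdeal_add (m₁ m₂ : ℕ) (J₁ : Ideal (Amod m₁)) (J₂ : Ideal (Amod m₂))
    (h₁ : J₁ ≠ ⊤) (h₂ : J₂ ≠ ⊤) :
    prodIdeal J₁ J₂ ≠ ⊤ ∧ ∀ p : ℕ, TB (prodIdeal J₁ J₂) p = TB J₁ p + TB J₂ p := by
  refine ⟨prodIdeal_ne_top h₁ h₂, fun p => ?_⟩
  rw [TB, TB, TB, TBiter_prodIdeal h₁ h₂,
    corankIdeal_prodIdeal (TBiter_ne_top h₁ p) (TBiter_ne_top h₂ p)]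
end

section
/- For every proper ideal J ⊆ 𝒜_m, the Thom–Boardman symbol TB(J) = (i_1, i_2, …) is a non-increasing sequence of nonnegative integers: i_{p+1} ≤ i_p for all p ≥ 1, and each i_p satisfies 0 ≤ i_p ≤ m. -/
open MvPowerSeries

lemma le_jacExt {m : ℕ} (k : ℕ) (B : Ideal (Amod m)) : B ≤ jacExt k B := by
  unfold jacExt
  split
  · exact le_rfl
  · exact le_sup_left

lemma rankIdeal_mono {m : ℕ} : Monotone (rankIdeal (m := m)) := fun _ _ h =>
  Submodule.finrank_mono (Submodule.span_mono (Set.image_mono h))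

lemma corankIdeal_antitone {m : ℕ} : Antitone (corankIdeal (m := m)) := fun _ _ h =>
  Nat.sub_le_sub_left (rankIdeal_mono h) m

lemma corankIdeal_le {m : ℕ} (B : Ideal (Amod m)) : corankIdeal B ≤ m :=
  Nat.sub_le _ _

lemma TBiter_le_succ {m : ℕ} (J : Ideal (Amod m)) (p : ℕ) : TBiter J p ≤ TBiter J (p + 1) :=
  le_jacExt _ _

theorem tb_antitone_general (m : ℕ) (J : Ideal (Amod m)) :
    ∀ p : ℕ, TB J (p + 1) ≤ TB J p ∧ TB J p ≤ m :=
  fun p => ⟨corankIdeal_antitone (TBiter_le_succ J p), corankIdeal_le _⟩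

/-- **Thom–Boardman symbols are non-increasing.** For every proper ideal `J ⊆ 𝒜 m`, the
Thom–Boardman symbol of `J` is a non-increasing sequence of nonnegative integers, each of
whose entries is at most `m`. -/
theorem tb_antitone (m : ℕ) (J : Ideal (Amod m)) (hJ : J ≠ ⊤) :
    ∀ p : ℕ, TB J (p + 1) ≤ TB J p ∧ TB J p ≤ m :=
  tb_antitone_general m J
end
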